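/- There exist no three-player impartial games X and Y such that X and Y are both O-games and X + Y is a P-game. -/
import Mathlib


/-- Three-player impartial games: well-founded game trees. -/
inductive G3 : Type 1 where
  | mk : (ι : Type) → (ι → G3) → G3

namespace G3

/-- The index type of options (moves) of a game. -/
def moves : G3 → Type
  | mk ι _ => ι

/-- The option of a game corresponding to a move. -/
def moveFn : (g : G3) → moves g → G3
  | mk _ f => f

/-- Disjunctive sum: move in exactly one component. -/
noncomputable def add : G3 → G3 → G3 :=
  G3.rec (fun ι f ihf =>
    G3.rec (fun κ g ihg =>
      mk (ι ⊕ κ) (fun x =>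
        match x with
        | Sum.inl i => ihf i (mk κ g)
        | Sum.inr j => ihg j)))

/-- The four outcome types of a three-player impartial game. -/
inductive PType : Type
  | N | O | P | Q
deriving DecidableEq

open Classical in
/-- The type of a game: `N` iff some option is a `P`-game; `O` iff it has at least
one option and all options are `N`-games; `P` iff all options are `O`-games;
`Q` otherwise. -/
noncomputable def typ : G3 → PType
  | mk ι f =>
    if ∃ i, typ (f i) = PType.P then PType.N
    else if Nonempty ι ∧ ∀ i, typ (f i) = PType.N then PType.O
    else if ∀ i, typ (f i) = PType.O then PType.P
    else PType.Q

/-- The Nim heap of size `n`: options are heaps of sizes `0, …, n-1`. -/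
def nim : ℕ → G3
  | n => mk (Fin n) (fun i => nim i)
termination_by n => n
decreasing_by exact i.isLt

/-- The sum of `n` Nim heaps of size 1. -/
noncomputable def ones : ℕ → G3
  | 0 => nim 0
  | n + 1 => add (ones n) (nim 1)

def IsOption (x y : G3) : Prop := ∃ i : moves y, moveFn y i = x

theorem isOption_wf : WellFounded IsOption := by
  constructor
  intro g
  induction g with
  | mk ι f ih =>
    constructor
    rintro y ⟨i, rfl⟩
    exact ih i

theorem add_mk (ι κ : Type) (f : ι → G3) (g : κ → G3) :
    add (mk ι f) (mk κ g) = mk (ι ⊕ κ) (fun x =>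
      match x with
      | Sum.inl i => add (f i) (mk κ g)
      | Sum.inr j => add (mk ι f) (g j)) := rfl

theorem exists_P_of_typ_N {ι : Type} {f : ι → G3} (h : typ (mk ι f) = PType.N) :
    ∃ i, typ (f i) = PType.P := by
  rw [typ] at h
  split_ifs at h with h1 h2 h3 <;> first | exact h1 | simp_all

theorem typ_eq_N_of_typ_O {ι : Type} {f : ι → G3} (h : typ (mk ι f) = PType.O) :
    ∀ i, typ (f i) = PType.N := by
  rw [typ] at h
  split_ifs at h with h1 h2 h3 <;> first | exact h2.2 | simp_all

theorem nonempty_of_typ_O {ι : Type} {f : ι → G3} (h : typ (mk ι f) = PType.O) :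
    Nonempty ι := by
  rw [typ] at h
  split_ifs at h with h1 h2 h3 <;> first | exact h2.1 | simp_all

theorem typ_eq_O_of_typ_P {ι : Type} {f : ι → G3} (h : typ (mk ι f) = PType.P) :
    ∀ i, typ (f i) = PType.O := by
  rw [typ] at h
  split_ifs at h with h1 h2 h3 <;> first | exact h3 | simp_all

theorem key : ∀ p : G3 × G3,
    (typ p.1 = PType.O → typ p.2 = PType.O → typ (add p.1 p.2) ≠ PType.P) ∧
    (typ p.1 = PType.N → typ p.2 = PType.O → typ (add p.1 p.2) ≠ PType.O) ∧
    (typ p.1 = PType.O → typ p.2 = PType.N → typ (add p.1 p.2) ≠ PType.O) ∧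
    (typ p.1 = PType.P → typ p.2 = PType.O → typ (add p.1 p.2) ≠ PType.N) ∧
    (typ p.1 = PType.O → typ p.2 = PType.P → typ (add p.1 p.2) ≠ PType.N) ∧
    (typ p.1 = PType.P → typ p.2 = PType.N → typ (add p.1 p.2) ≠ PType.P) ∧
    (typ p.1 = PType.N → typ p.2 = PType.P → typ (add p.1 p.2) ≠ PType.P) ∧
    (typ p.1 = PType.P → typ p.2 = PType.P → typ (add p.1 p.2) ≠ PType.O) := by
  intro p
  refine (isOption_wf.prod_gameAdd isOption_wf).induction
    (C := fun p : G3 × G3 =>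
    (typ p.1 = PType.O → typ p.2 = PType.O → typ (add p.1 p.2) ≠ PType.P) ∧
    (typ p.1 = PType.N → typ p.2 = PType.O → typ (add p.1 p.2) ≠ PType.O) ∧
    (typ p.1 = PType.O → typ p.2 = PType.N → typ (add p.1 p.2) ≠ PType.O) ∧
    (typ p.1 = PType.P → typ p.2 = PType.O → typ (add p.1 p.2) ≠ PType.N) ∧
    (typ p.1 = PType.O → typ p.2 = PType.P → typ (add p.1 p.2) ≠ PType.N) ∧
    (typ p.1 = PType.P → typ p.2 = PType.N → typ (add p.1 p.2) ≠ PType.P) ∧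
    (typ p.1 = PType.N → typ p.2 = PType.P → typ (add p.1 p.2) ≠ PType.P) ∧
    (typ p.1 = PType.P → typ p.2 = PType.P → typ (add p.1 p.2) ≠ PType.O)) p ?_
  clear p
  rintro ⟨⟨ι, f⟩, ⟨κ, g⟩⟩ IH
  simp only
  have IHl : ∀ i : ι,
      (typ (f i) = PType.O → typ (mk κ g) = PType.O → typ (add (f i) (mk κ g)) ≠ PType.P) ∧
      (typ (f i) = PType.N → typ (mk κ g) = PType.O → typ (add (f i) (mk κ g)) ≠ PType.O) ∧
      (typ (f i) = PType.O → typ (mk κ g) = PType.N → typ (add (f i) (mk κ g)) ≠ PType.O) ∧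
      (typ (f i) = PType.P → typ (mk κ g) = PType.O → typ (add (f i) (mk κ g)) ≠ PType.N) ∧
      (typ (f i) = PType.O → typ (mk κ g) = PType.P → typ (add (f i) (mk κ g)) ≠ PType.N) ∧
      (typ (f i) = PType.P → typ (mk κ g) = PType.N → typ (add (f i) (mk κ g)) ≠ PType.P) ∧
      (typ (f i) = PType.N → typ (mk κ g) = PType.P → typ (add (f i) (mk κ g)) ≠ PType.P) ∧
      (typ (f i) = PType.P → typ (mk κ g) = PType.P → typ (add (f i) (mk κ g)) ≠ PType.O) :=
    fun i => IH (f i, mk κ g) (Prod.GameAdd.fst ⟨i, rfl⟩)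
  have IHr : ∀ j : κ,
      (typ (mk ι f) = PType.O → typ (g j) = PType.O → typ (add (mk ι f) (g j)) ≠ PType.P) ∧
      (typ (mk ι f) = PType.N → typ (g j) = PType.O → typ (add (mk ι f) (g j)) ≠ PType.O) ∧
      (typ (mk ι f) = PType.O → typ (g j) = PType.N → typ (add (mk ι f) (g j)) ≠ PType.O) ∧
      (typ (mk ι f) = PType.P → typ (g j) = PType.O → typ (add (mk ι f) (g j)) ≠ PType.N) ∧
      (typ (mk ι f) = PType.O → typ (g j) = PType.P → typ (add (mk ι f) (g j)) ≠ PType.N) ∧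
      (typ (mk ι f) = PType.P → typ (g j) = PType.N → typ (add (mk ι f) (g j)) ≠ PType.P) ∧
      (typ (mk ι f) = PType.N → typ (g j) = PType.P → typ (add (mk ι f) (g j)) ≠ PType.P) ∧
      (typ (mk ι f) = PType.P → typ (g j) = PType.P → typ (add (mk ι f) (g j)) ≠ PType.O) :=
    fun j => IH (mk ι f, g j) (Prod.GameAdd.snd ⟨j, rfl⟩)
  clear IH
  refine ⟨?S1, ?S2a, ?S2b, ?S3a, ?S3b, ?S4a, ?S4b, ?S5⟩ <;> intro hX hY hS <;>
    rw [add_mk] at hS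
  case S1 =>
    -- X O, Y O, sum P : pick i, f i is N, (f i)+Y is O : contradict S2a at (f i, Y)
    obtain ⟨i⟩ := nonempty_of_typ_O hX
    exact (IHl i).2.1 (typ_eq_N_of_typ_O hX i) hY (typ_eq_O_of_typ_P hS (Sum.inl i))
  case S2a =>
    -- X N: pick P-option f i; (f i)+Y is N (option of O game): contradict S3a
    obtain ⟨i, hi⟩ := exists_P_of_typ_N hX
    exact (IHl i).2.2.2.1 hi hY (typ_eq_N_of_typ_O hS (Sum.inl i))
  case S2b =>
    obtain ⟨j, hj⟩ := exists_P_of_typ_N hY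
    exact (IHr j).2.2.2.2.1 hX hj (typ_eq_N_of_typ_O hS (Sum.inr j))
  case S3a =>
    -- X P, Y O, sum N: some option of sum is P
    obtain ⟨s, hs⟩ := exists_P_of_typ_N hS
    cases s with
    | inl i => exact (IHl i).1 (typ_eq_O_of_typ_P hX i) hY hs
    | inr j => exact (IHr j).2.2.2.2.2.1 hX (typ_eq_N_of_typ_O hY j) hs
  case S3b =>
    obtain ⟨s, hs⟩ := exists_P_of_typ_N hS
    cases s with
    | inl i => exact (IHl i).2.2.2.2.2.2.1 (typ_eq_N_of_typ_O hX i) hY hs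
    | inr j => exact (IHr j).1 hX (typ_eq_O_of_typ_P hY j) hs
  case S4a =>
    -- X P, Y N, sum P: Y has P-option g j; X+(g j) is O: contradict S5
    obtain ⟨j, hj⟩ := exists_P_of_typ_N hY
    exact (IHr j).2.2.2.2.2.2.2 hX hj (typ_eq_O_of_typ_P hS (Sum.inr j))
  case S4b =>
    obtain ⟨i, hi⟩ := exists_P_of_typ_N hX
    exact (IHl i).2.2.2.2.2.2.2 hi hY (typ_eq_O_of_typ_P hS (Sum.inl i))
  case S5 =>
    -- X P, Y P, sum O: sum has an option, all its options N
    obtain ⟨s⟩ := nonempty_of_typ_O hS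
    cases s with
    | inl i =>
      exact (IHl i).2.2.2.2.1 (typ_eq_O_of_typ_P hX i) hY (typ_eq_N_of_typ_O hS (Sum.inl i))
    | inr j =>
      exact (IHr j).2.2.2.1 hX (typ_eq_O_of_typ_P hY j) (typ_eq_N_of_typ_O hS (Sum.inr j))

theorem no_O_plus_O_eq_P :
    ¬ ∃ X Y : G3, typ X = PType.O ∧ typ Y = PType.O ∧ typ (add X Y) = PType.P := by
  rintro ⟨X, Y, hX, hY, hS⟩
  exact (key (X, Y)).1 hX hY hS

end G3
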